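/- arXiv:2511.02158 — 5 statements merged into one kernel-verified Lean document; each statement's English description precedes it below -/
import Mathlib

section
/- Let a, b, c be real numbers with a < 0 and c > 0, set D := sqrt(b^2/4 - a*c) and k0 := (1 + b/(2D))/(1 - b/(2D)), and let v(t) = (-(1/a)*D) * (1 - k0*exp(-2*D*t))/(1 + k0*exp(-2*D*t)) - b/(2a). Then: (i) v is monotone on [0,∞) with 0 ≤ v(t) < -(2D + b)/(2a) for all t ≥ 0; and (ii) if in addition b ≤ 0, then v(t) ≤ -(1/a)*D for all t ≥ 0. -/
open Real Set

/-!
Write `E t = k0 * exp (-2 D t)` and `cayley x = (1 - x) / (1 + x)`, so that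
`v t = (-D / a) * cayley (E t) - b / (2a)`. Since `a c < 0` we have `|b| < 2 D`, hence
`k0 = cayley (-b / (2D)) > 0` and `E` decreases through positive values. The Cayley transform
decreases on `(-1, ∞)`, so `v` increases; it is an involution, so `v 0 = 0`; and it is `< 1` at
positive arguments, which gives the strict upper bound.
-/

noncomputable def cayley (x : ℝ) : ℝ := (1 - x) / (1 + x)

theorem cayley_cayley {x : ℝ} (hx : x ≠ -1) : cayley (cayley x) = x := by
  have hx' : 1 + x ≠ 0 := fun h => hx (by linarith)
  unfold cayley
  field_simp
  ring

theorem cayley_pos {x : ℝ} (h₁ : -1 < x) (h₂ : x < 1) : 0 < cayley x :=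
  div_pos (by linarith) (by linarith)

theorem cayley_lt_one {x : ℝ} (hx : 0 < x) : cayley x < 1 :=
  (div_lt_one (by linarith)).2 (by linarith)

theorem antitoneOn_cayley : AntitoneOn cayley (Ioi (-1)) := by
  intro x hx y hy hxy
  have hx₀ : 0 < 1 + x := by linarith [mem_Ioi.1 hx]
  have hy₀ : 0 < 1 + y := by linarith [mem_Ioi.1 hy]
  rw [cayley, cayley, div_le_div_iff₀ hy₀ hx₀]
  nlinarith

theorem monotone_mul_cayley_exp {α k l : ℝ} (hα : 0 ≤ α) (hk : 0 < k) (hl : l ≤ 0) :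
    Monotone fun t => α * cayley (k * exp (l * t)) := by
  intro s t hst
  have hpos : ∀ u, k * exp (l * u) ∈ Ioi (-1) := fun u => by
    have := mul_pos hk (exp_pos (l * u))
    exact mem_Ioi.2 (by linarith)
  have hexp : k * exp (l * t) ≤ k * exp (l * s) :=
    mul_le_mul_of_nonneg_left (exp_le_exp.2 (mul_le_mul_of_nonpos_left hst hl)) hk.le
  exact mul_le_mul_of_nonneg_left (antitoneOn_cayley (hpos t) (hpos s) hexp) hα

theorem abs_lt_two_mul_sqrt_discrim {a b c : ℝ} (hac : a * c < 0) :
    |b| < 2 * √(b ^ 2 / 4 - a * c) := by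
  rw [← sqrt_sq (abs_nonneg b), show (2 : ℝ) = √(2 ^ 2) by simp, ← sqrt_mul (by positivity),
    sqrt_lt_sqrt_iff (by positivity), sq_abs]
  linarith

/-- Lemma B.1 (bounds part): the explicit solution of the conditional-variance
Riccati equation is monotone and satisfies `0 ≤ v t < -(2D + b)/(2a)`, and if
`b ≤ 0` then also `v t ≤ -(1/a) D`. -/
theorem stmt1 (a b c : ℝ) (ha : a < 0) (hc : 0 < c)
    (D : ℝ) (hD : D = Real.sqrt (b ^ 2 / 4 - a * c))
    (k0 : ℝ) (hk0 : k0 = (1 + b / (2 * D)) / (1 - b / (2 * D)))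
    (v : ℝ → ℝ)
    (hv : ∀ t : ℝ, v t =
      (-(1 / a) * D) * (1 - k0 * Real.exp (-2 * D * t)) / (1 + k0 * Real.exp (-2 * D * t))
        - b / (2 * a)) :
    (MonotoneOn v (Ici (0 : ℝ)) ∨ AntitoneOn v (Ici (0 : ℝ))) ∧
    (∀ t : ℝ, 0 ≤ t → 0 ≤ v t ∧ v t < -(2 * D + b) / (2 * a)) ∧
    (b ≤ 0 → ∀ t : ℝ, 0 ≤ t → v t ≤ -(1 / a) * D) := by
  have hbD : |b| < 2 * D := hD ▸ abs_lt_two_mul_sqrt_discrim (mul_neg_of_neg_of_pos ha hc)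
  have hDpos : 0 < D := by linarith [abs_nonneg b]
  obtain ⟨hb₁, hb₂⟩ := abs_lt.1 hbD
  have hr₁ : -1 < b / (2 * D) := by rw [lt_div_iff₀ (by linarith)]; linarith
  have hr₂ : b / (2 * D) < 1 := (div_lt_one (by linarith)).2 hb₂
  have hk0c : k0 = cayley (-(b / (2 * D))) := by rw [hk0, cayley, sub_neg_eq_add, ← sub_eq_add_neg]
  have hk0pos : 0 < k0 := hk0c ▸ cayley_pos (by linarith) (by linarith)
  have hα : 0 < -(1 / a) * D := mul_pos (by simpa using ha) hDpos
  have hv' : ∀ t, v t = -(1 / a) * D * cayley (k0 * exp (-2 * D * t)) - b / (2 * a) := fun t => by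
    rw [hv, cayley, mul_div_assoc]
  have hmono : Monotone v := fun s t hst => by
    simpa only [hv', sub_le_sub_iff_right] using
      monotone_mul_cayley_exp hα.le hk0pos (by linarith) hst
  have hv0 : v 0 = 0 := by
    rw [hv', mul_zero, exp_zero, mul_one, hk0c, cayley_cayley (by linarith)]
    field_simp
    ring
  have hlt : ∀ t, v t < -(1 / a) * D - b / (2 * a) := fun t => by
    rw [hv', sub_lt_sub_iff_right]
    exact mul_lt_of_lt_one_right hα (cayley_lt_one (mul_pos hk0pos (exp_pos _)))
  refine ⟨Or.inl (hmono.monotoneOn _), fun t ht => ⟨hv0 ▸ hmono ht, ?_⟩, fun hb t _ => ?_⟩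
  · calc v t < -(1 / a) * D - b / (2 * a) := hlt t
      _ = -(2 * D + b) / (2 * a) := by field_simp; ring
  · have : 0 ≤ b / (2 * a) := div_nonneg_of_nonpos hb (by linarith)
    linarith [hlt t]
end

section
/- Let T > 0, κ and ζ be real numbers, let σ : [0,T] → ℝ be continuous with 0 ≤ σ(t) ≤ b^2 for all t ∈ [0,T], where b^2 ≥ 0 is a constant. Suppose g1, g2, g3 : [0,T] → ℝ are differentiable and satisfy g1'(t) = -2σ(t)g1(t)^2 + 2κ g1(t) - ζ, g2'(t) = -2 b^2 g2(t)^2 + 2κ g2(t) - ζ, g3'(t) = 2κ g3(t) - ζ on [0,T], with common terminal value g1(T) = g2(T) = g3(T). Then g3(t) ≤ g1(t) ≤ g2(t) for all t ∈ [0,T]. -/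
/-!
Both inequalities compare two solutions with the same terminal value. Their difference
`u` satisfies a linear differential inequality `u' ≤ c u` on `[0, T]`, with
`c = 2κ` for `g1 - g3` (using `σ ≥ 0`) and `c = 2κ - 2b²(g1 + g2)` for `g2 - g1` (using
`σ ≤ b²`). Multiplying by the integrating factor `exp (-∫ c)` makes `u` antitone up to a
positive factor, so `u(T) = 0` forces `u ≥ 0` on `[0, T]`.
-/

open Real Set

theorem ContinuousOn.exists_forall_Icc_hasDerivAt {a b : ℝ} {c : ℝ → ℝ} (hab : a ≤ b)
    (hc : ContinuousOn c (Icc a b)) :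
    ∃ A : ℝ → ℝ, ∀ t ∈ Icc a b, HasDerivAt A (c t) t := by
  have hext : Continuous (IccExtend hab ((Icc a b).domRestrict c)) := hc.domRestrict.Icc_extend'
  refine ⟨fun t => ∫ s in a..t, IccExtend hab ((Icc a b).domRestrict c) s, fun t ht => ?_⟩
  simpa [IccExtend_of_mem _ _ ht] using (hext.integral_hasStrictDerivAt a t).hasDerivAt

theorem nonneg_of_hasDerivAt_le_mul_of_nonneg_right {a b : ℝ} {c u u' : ℝ → ℝ}
    (hc : ContinuousOn c (Icc a b)) (hu : ∀ t ∈ Icc a b, HasDerivAt u (u' t) t)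
    (hu' : ∀ t ∈ Icc a b, u' t ≤ c t * u t) (hub : 0 ≤ u b) :
    ∀ t ∈ Icc a b, 0 ≤ u t := by
  intro t ht
  obtain ⟨A, hA⟩ := hc.exists_forall_Icc_hasDerivAt (ht.1.trans ht.2)
  have hf : ∀ s ∈ Icc a b,
      HasDerivAt (fun s => u s * exp (-A s)) ((u' s - c s * u s) * exp (-A s)) s :=
    fun s hs => ((hu s hs).mul (hA s hs).neg.exp).congr_deriv (by rw [Pi.neg_apply]; ring)
  have hanti : AntitoneOn (fun s => u s * exp (-A s)) (Icc a b) :=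
    antitoneOn_of_hasDerivWithinAt_nonpos (convex_Icc a b)
      (fun s hs => (hf s hs).continuousAt.continuousWithinAt)
      (fun s hs => (hf s (interior_subset hs)).hasDerivWithinAt)
      (fun s hs => mul_nonpos_of_nonpos_of_nonneg
        (sub_nonpos.mpr (hu' s (interior_subset hs))) (exp_pos _).le)
  have hfb : 0 ≤ u b * exp (-A b) := mul_nonneg hub (exp_pos _).le
  exact nonneg_of_mul_nonneg_left (hfb.trans (hanti ht ⟨ht.1.trans ht.2, le_rfl⟩ ht.2))
    (exp_pos _)

theorem stmt2_general (T κ ζ b : ℝ)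
    (σ : ℝ → ℝ)
    (hσ : ∀ t ∈ Icc (0 : ℝ) T, 0 ≤ σ t ∧ σ t ≤ b ^ 2)
    (g1 g2 g3 : ℝ → ℝ)
    (hg1 : ∀ t ∈ Icc (0 : ℝ) T,
      HasDerivAt g1 (-2 * σ t * g1 t ^ 2 + 2 * κ * g1 t - ζ) t)
    (hg2 : ∀ t ∈ Icc (0 : ℝ) T,
      HasDerivAt g2 (-2 * b ^ 2 * g2 t ^ 2 + 2 * κ * g2 t - ζ) t)
    (hg3 : ∀ t ∈ Icc (0 : ℝ) T,
      HasDerivAt g3 (2 * κ * g3 t - ζ) t)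
    (h12 : g1 T = g2 T) (h13 : g1 T = g3 T) :
    ∀ t ∈ Icc (0 : ℝ) T, g3 t ≤ g1 t ∧ g1 t ≤ g2 t := by
  have hg1c : ContinuousOn g1 (Icc 0 T) :=
    continuousOn_of_forall_continuousAt fun t ht => (hg1 t ht).continuousAt
  have hg2c : ContinuousOn g2 (Icc 0 T) :=
    continuousOn_of_forall_continuousAt fun t ht => (hg2 t ht).continuousAt
  have hlower : ∀ t ∈ Icc (0 : ℝ) T, 0 ≤ g1 t - g3 t :=
    nonneg_of_hasDerivAt_le_mul_of_nonneg_right (c := fun _ => 2 * κ) continuousOn_const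
      (fun t ht => (hg1 t ht).sub (hg3 t ht))
      (fun t ht => by nlinarith [(hσ t ht).1, sq_nonneg (g1 t)]) (by rw [h13, sub_self])
  have hupper : ∀ t ∈ Icc (0 : ℝ) T, 0 ≤ g2 t - g1 t :=
    nonneg_of_hasDerivAt_le_mul_of_nonneg_right (c := fun t => 2 * κ - 2 * b ^ 2 * (g1 t + g2 t))
      (continuousOn_const.sub (continuousOn_const.mul (hg1c.add hg2c)))
      (fun t ht => (hg2 t ht).sub (hg1 t ht))
      (fun t ht => by nlinarith [(hσ t ht).2, sq_nonneg (g1 t)]) (by rw [h12, sub_self])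
  exact fun t ht => ⟨sub_nonneg.mp (hlower t ht), sub_nonneg.mp (hupper t ht)⟩

/-- Lemma B.2: comparison theorem for scalar Riccati equations integrated
backward from a common terminal value. -/
theorem stmt2 (T κ ζ b : ℝ) (hT : 0 < T) (hb : 0 ≤ b ^ 2)
    (σ : ℝ → ℝ) (hσc : ContinuousOn σ (Icc (0 : ℝ) T))
    (hσ : ∀ t ∈ Icc (0 : ℝ) T, 0 ≤ σ t ∧ σ t ≤ b ^ 2)
    (g1 g2 g3 : ℝ → ℝ)
    (hg1 : ∀ t ∈ Icc (0 : ℝ) T,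
      HasDerivAt g1 (-2 * σ t * g1 t ^ 2 + 2 * κ * g1 t - ζ) t)
    (hg2 : ∀ t ∈ Icc (0 : ℝ) T,
      HasDerivAt g2 (-2 * b ^ 2 * g2 t ^ 2 + 2 * κ * g2 t - ζ) t)
    (hg3 : ∀ t ∈ Icc (0 : ℝ) T,
      HasDerivAt g3 (2 * κ * g3 t - ζ) t)
    (h12 : g1 T = g2 T) (h13 : g1 T = g3 T) :
    ∀ t ∈ Icc (0 : ℝ) T, g3 t ≤ g1 t ∧ g1 t ≤ g2 t :=
  stmt2_general T κ ζ b σ hσ g1 g2 g3 hg1 hg2 hg3 h12 h13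
end

section
/- Let κ > 0, b ≠ 0, ζ > 0 with Δ := 2 b^2 ζ - κ^2 < 0, and set ω := sqrt(-Δ) and let T > 0. Then ω*cosh(ω s) + κ*sinh(ω s) > 0 for every s ≥ 0, and the function f(t) := ζ * sinh(ω (T - t)) / (ω*cosh(ω (T - t)) + κ*sinh(ω (T - t))) is well defined on [0,T], satisfies f(T) = 0, f(t) ≥ 0 on [0,T], and solves f'(t) = -2 b^2 f(t)^2 + 2κ f(t) - ζ on [0,T]. -/
/-!
In the time-to-maturity variable `s = T - t` the solution is `g s = ζ sinh(ω s) / D s` with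
`D s = ω cosh(ω s) + κ sinh(ω s)`. Since `D' = ω (κ cosh + ω sinh)`, the quotient rule and
`cosh² - sinh² = 1` give `g' = ζ ω² / D²`; expanding `2b² g² - 2κ g + ζ` over `D²` and using
`2b²ζ = κ² - ω²` gives the same quantity, so `g` solves the forward Riccati equation and
`f t = g (T - t)` the backward one.
-/

open Real Set

noncomputable section

def hyperbolicDenom (κ ω s : ℝ) : ℝ := ω * cosh (ω * s) + κ * sinh (ω * s)

def riccatiHyperbolic (ζ κ ω s : ℝ) : ℝ := ζ * sinh (ω * s) / hyperbolicDenom κ ω s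

end

lemma hyperbolicDenom_pos {κ ω s : ℝ} (hκ : 0 ≤ κ) (hω : 0 < ω) (hs : 0 ≤ s) :
    0 < hyperbolicDenom κ ω s :=
  add_pos_of_pos_of_nonneg (mul_pos hω (cosh_pos _))
    (mul_nonneg hκ (sinh_nonneg_iff.mpr (mul_nonneg hω.le hs)))

lemma riccatiHyperbolic_nonneg {ζ κ ω s : ℝ} (hζ : 0 ≤ ζ) (hκ : 0 ≤ κ) (hω : 0 < ω)
    (hs : 0 ≤ s) : 0 ≤ riccatiHyperbolic ζ κ ω s :=
  div_nonneg (mul_nonneg hζ (sinh_nonneg_iff.mpr (mul_nonneg hω.le hs)))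
    (hyperbolicDenom_pos hκ hω hs).le

lemma hasDerivAt_hyperbolicDenom (κ ω s : ℝ) :
    HasDerivAt (hyperbolicDenom κ ω)
      (ω * (κ * cosh (ω * s) + ω * sinh (ω * s))) s := by
  have hu : HasDerivAt (fun s => ω * s) ω s := hasDerivAt_const_mul ω
  exact ((hu.cosh.const_mul ω).add (hu.sinh.const_mul κ)).congr_deriv (by ring)

lemma hasDerivAt_riccatiHyperbolic {ζ κ ω s : ℝ} (hD : hyperbolicDenom κ ω s ≠ 0) :
    HasDerivAt (riccatiHyperbolic ζ κ ω) (ζ * ω ^ 2 / hyperbolicDenom κ ω s ^ 2) s := by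
  have hu : HasDerivAt (fun s => ω * s) ω s := hasDerivAt_const_mul ω
  refine ((hu.sinh.const_mul ζ).div (hasDerivAt_hyperbolicDenom κ ω s) hD).congr_deriv ?_
  rw [div_left_inj' (pow_ne_zero 2 hD)]
  unfold hyperbolicDenom
  linear_combination ζ * ω ^ 2 * cosh_sq_sub_sinh_sq (ω * s)

lemma riccati_rhs_riccatiHyperbolic {c ζ κ ω s : ℝ} (hc : c * ζ = κ ^ 2 - ω ^ 2)
    (hD : hyperbolicDenom κ ω s ≠ 0) :
    c * riccatiHyperbolic ζ κ ω s ^ 2 - 2 * κ * riccatiHyperbolic ζ κ ω s + ζ =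
      ζ * ω ^ 2 / hyperbolicDenom κ ω s ^ 2 := by
  rw [riccatiHyperbolic]
  field_simp
  rw [hyperbolicDenom]
  linear_combination ζ * sinh (ω * s) ^ 2 * hc + ζ * ω ^ 2 * cosh_sq_sub_sinh_sq (ω * s)

theorem hasDerivAt_riccatiHyperbolic_riccati {c ζ κ ω s : ℝ} (hc : c * ζ = κ ^ 2 - ω ^ 2)
    (hD : hyperbolicDenom κ ω s ≠ 0) :
    HasDerivAt (riccatiHyperbolic ζ κ ω)
      (c * riccatiHyperbolic ζ κ ω s ^ 2 - 2 * κ * riccatiHyperbolic ζ κ ω s + ζ) s := by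
  rw [riccati_rhs_riccatiHyperbolic hc hD]
  exact hasDerivAt_riccatiHyperbolic hD

theorem stmt5_general (κ b ζ T : ℝ) (hκ : 0 < κ) (hζ : 0 < ζ)
    (hΔ : 2 * b ^ 2 * ζ - κ ^ 2 < 0)
    (ω : ℝ) (hω : ω = Real.sqrt (-(2 * b ^ 2 * ζ - κ ^ 2)))
    (f : ℝ → ℝ)
    (hf : ∀ t : ℝ, f t = ζ * Real.sinh (ω * (T - t)) /
      (ω * Real.cosh (ω * (T - t)) + κ * Real.sinh (ω * (T - t)))) :
    (∀ s : ℝ, 0 ≤ s → 0 < ω * Real.cosh (ω * s) + κ * Real.sinh (ω * s)) ∧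
    f T = 0 ∧
    (∀ t ∈ Icc (0 : ℝ) T, 0 ≤ f t) ∧
    (∀ t ∈ Icc (0 : ℝ) T,
      HasDerivAt f (-2 * b ^ 2 * f t ^ 2 + 2 * κ * f t - ζ) t) := by
  have hω_pos : 0 < ω := hω ▸ sqrt_pos.mpr (by linarith)
  have hω_sq : 2 * b ^ 2 * ζ = κ ^ 2 - ω ^ 2 := by
    rw [hω, sq_sqrt (by linarith)]; ring
  have hf_eq : f = fun t => riccatiHyperbolic ζ κ ω (T - t) := funext hf
  subst hf_eq
  refine ⟨fun s hs => hyperbolicDenom_pos hκ.le hω_pos hs, ?_,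
    fun t ht => riccatiHyperbolic_nonneg hζ.le hκ.le hω_pos (sub_nonneg.mpr ht.2),
    fun t ht => ?_⟩
  · simp [riccatiHyperbolic]
  · have hD := (hyperbolicDenom_pos hκ.le hω_pos (sub_nonneg.mpr ht.2)).ne'
    exact ((hasDerivAt_riccatiHyperbolic_riccati hω_sq hD).comp_const_sub T t).congr_deriv
      (by ring)

/-- Case `Δ < 0` of Lemma B.3: the hyperbolic explicit solution of the terminal
value Riccati problem `f' = -2 b² f² + 2κ f - ζ`, `f T = 0`. -/
theorem stmt5 (κ b ζ T : ℝ) (hκ : 0 < κ) (hb : b ≠ 0) (hζ : 0 < ζ) (hT : 0 < T)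
    (hΔ : 2 * b ^ 2 * ζ - κ ^ 2 < 0)
    (ω : ℝ) (hω : ω = Real.sqrt (-(2 * b ^ 2 * ζ - κ ^ 2)))
    (f : ℝ → ℝ)
    (hf : ∀ t : ℝ, f t = ζ * Real.sinh (ω * (T - t)) /
      (ω * Real.cosh (ω * (T - t)) + κ * Real.sinh (ω * (T - t)))) :
    (∀ s : ℝ, 0 ≤ s → 0 < ω * Real.cosh (ω * s) + κ * Real.sinh (ω * s)) ∧
    f T = 0 ∧
    (∀ t ∈ Icc (0 : ℝ) T, 0 ≤ f t) ∧
    (∀ t ∈ Icc (0 : ℝ) T,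
      HasDerivAt f (-2 * b ^ 2 * f t ^ 2 + 2 * κ * f t - ζ) t) :=
  stmt5_general κ b ζ T hκ hζ hΔ ω hω f hf
end

section
/- Let κ > 0, b ≠ 0, ζ > 0 with 2 b^2 ζ = κ^2, and let T > 0. Then the function f(t) := ζ (T - t) / (1 + κ (T - t)) is well defined on [0,T], satisfies f(T) = 0, f(t) ≥ 0 on [0,T], and solves f'(t) = -2 b^2 f(t)^2 + 2κ f(t) - ζ on [0,T]. -/
/-! With `s = T - t`, the candidate is `f = ζ s / (1 + κ s)`, whose derivative in `t` is
`-ζ / (1 + κ s)²`. When `2 b² ζ = κ²` the Riccati right-hand side has zero discriminant: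
`ζ (-2 b² x² + 2 κ x - ζ) = -(ζ - κ x)²`, and `ζ - κ f = ζ / (1 + κ s)`, so both sides agree.
The denominator is at least `1` for `t ≤ T`. -/

open Real Set

namespace DegenerateRiccati

noncomputable def sol (κ ζ T t : ℝ) : ℝ := ζ * (T - t) / (1 + κ * (T - t))

theorem one_le_denom {κ T t : ℝ} (hκ : 0 ≤ κ) (ht : t ≤ T) : 1 ≤ 1 + κ * (T - t) :=
  le_add_of_nonneg_right (mul_nonneg hκ (sub_nonneg.mpr ht))

theorem sol_self (κ ζ T : ℝ) : sol κ ζ T T = 0 := by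
  simp [sol]

theorem sol_nonneg {κ ζ T t : ℝ} (hκ : 0 ≤ κ) (hζ : 0 ≤ ζ) (ht : t ≤ T) :
    0 ≤ sol κ ζ T t :=
  div_nonneg (mul_nonneg hζ (sub_nonneg.mpr ht)) (zero_le_one.trans (one_le_denom hκ ht))

theorem hasDerivAt_sol {κ ζ T t : ℝ} (hden : 1 + κ * (T - t) ≠ 0) :
    HasDerivAt (sol κ ζ T) (-ζ / (1 + κ * (T - t)) ^ 2) t := by
  have hnum : HasDerivAt (fun t : ℝ => ζ * (T - t)) (-ζ) t := by
    simpa using ((hasDerivAt_id t).const_sub T).const_mul ζ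
  have hden' : HasDerivAt (fun t : ℝ => 1 + κ * (T - t)) (-κ) t := by
    simpa using (((hasDerivAt_id t).const_sub T).const_mul κ).const_add 1
  exact (hnum.div hden' hden).congr_deriv (by field_simp; ring)

theorem riccati_rhs_mul_eq_neg_sq {κ b ζ : ℝ} (hΔ : 2 * b ^ 2 * ζ = κ ^ 2) (x : ℝ) :
    ζ * (-2 * b ^ 2 * x ^ 2 + 2 * κ * x - ζ) = -(ζ - κ * x) ^ 2 := by
  linear_combination (-x ^ 2) * hΔ

theorem riccati_rhs_sol {κ b ζ T t : ℝ} (hζ : ζ ≠ 0) (hΔ : 2 * b ^ 2 * ζ = κ ^ 2)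
    (hden : 1 + κ * (T - t) ≠ 0) :
    -2 * b ^ 2 * sol κ ζ T t ^ 2 + 2 * κ * sol κ ζ T t - ζ = -ζ / (1 + κ * (T - t)) ^ 2 := by
  have hgap : ζ - κ * sol κ ζ T t = ζ / (1 + κ * (T - t)) := by
    rw [sol]
    field_simp
    ring
  apply mul_left_cancel₀ hζ
  rw [riccati_rhs_mul_eq_neg_sq hΔ, hgap]
  field_simp

end DegenerateRiccati

open DegenerateRiccati in
theorem stmt6_general (κ b ζ T : ℝ) (hκ : 0 < κ) (hζ : 0 < ζ)
    (hΔ : 2 * b ^ 2 * ζ = κ ^ 2)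
    (f : ℝ → ℝ)
    (hf : ∀ t : ℝ, f t = ζ * (T - t) / (1 + κ * (T - t))) :
    f T = 0 ∧
    (∀ t ∈ Icc (0 : ℝ) T, 0 ≤ f t) ∧
    (∀ t ∈ Icc (0 : ℝ) T,
      HasDerivAt f (-2 * b ^ 2 * f t ^ 2 + 2 * κ * f t - ζ) t) := by
  obtain rfl : f = sol κ ζ T := funext hf
  refine ⟨sol_self κ ζ T, fun t ht => sol_nonneg hκ.le hζ.le ht.2, fun t ht => ?_⟩
  have hden : 1 + κ * (T - t) ≠ 0 := (zero_lt_one.trans_le (one_le_denom hκ.le ht.2)).ne'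
  rw [riccati_rhs_sol hζ.ne' hΔ hden]
  exact hasDerivAt_sol hden

/-- Degenerate case `2 b² ζ = κ²` of Lemma B.3: the rational explicit solution
of the terminal value Riccati problem `f' = -2 b² f² + 2κ f - ζ`, `f T = 0`. -/
theorem stmt6 (κ b ζ T : ℝ) (hκ : 0 < κ) (hb : b ≠ 0) (hζ : 0 < ζ) (hT : 0 < T)
    (hΔ : 2 * b ^ 2 * ζ = κ ^ 2)
    (f : ℝ → ℝ)
    (hf : ∀ t : ℝ, f t = ζ * (T - t) / (1 + κ * (T - t))) :
    f T = 0 ∧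
    (∀ t ∈ Icc (0 : ℝ) T, 0 ≤ f t) ∧
    (∀ t ∈ Icc (0 : ℝ) T,
      HasDerivAt f (-2 * b ^ 2 * f t ^ 2 + 2 * κ * f t - ζ) t) :=
  stmt6_general κ b ζ T hκ hζ hΔ f hf
end

section
/- Let κ > 0, b ≠ 0, ζ > 0 with Δ := 2 b^2 ζ - κ^2 > 0, set ω := sqrt(Δ) and T_c := (π - arctan(ω/κ)) / ω. Then for every T with 0 < T < T_c, the quantity ω*cos(ω (T - t)) + κ*sin(ω (T - t)) is strictly positive for all t ∈ [0,T], and the function f(t) := ζ * sin(ω (T - t)) / (ω*cos(ω (T - t)) + κ*sin(ω (T - t))) is well defined on [0,T], satisfies f(T) = 0, f(t) ≥ 0 on [0,T], and solves f'(t) = -2 b^2 f(t)^2 + 2κ f(t) - ζ on [0,T]. -/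
/-!
Write `φ = arctan (ω / κ) > 0`. The denominator is the phase-shifted sine
`ω cos s + κ sin s = √(κ² + ω²) sin (s + φ)`, positive as long as `s + φ < π`, i.e. for
`s = ω (T - t) ≤ ω T < π - φ`; on the same range `sin s ≥ 0`, so the solution is nonnegative.
The Riccati equation is the quotient rule: after clearing the denominator, the two sides
differ by `ζ sin² s (ω² + κ² - 2 b² ζ) = 0`.
-/

open Real Set

lemma mul_cos_add_mul_sin_eq_sqrt_mul_sin_add_arctan {κ : ℝ} (hκ : 0 < κ) (ω s : ℝ) :
    ω * cos s + κ * sin s = √(κ ^ 2 + ω ^ 2) * sin (s + arctan (ω / κ)) := by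
  have hsqrt : √(1 + (ω / κ) ^ 2) = √(κ ^ 2 + ω ^ 2) / κ := by
    rw [show 1 + (ω / κ) ^ 2 = (κ ^ 2 + ω ^ 2) / κ ^ 2 by field_simp,
      sqrt_div (by positivity), sqrt_sq hκ.le]
  rw [sin_add, sin_arctan, cos_arctan, hsqrt]
  field_simp
  ring

lemma mul_cos_add_mul_sin_pos {κ ω s : ℝ} (hκ : 0 < κ) (hω : 0 < ω) (hs₀ : 0 ≤ s)
    (hs : s < π - arctan (ω / κ)) : 0 < ω * cos s + κ * sin s := by
  have hφ : 0 < arctan (ω / κ) := arctan_pos.2 (div_pos hω hκ)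
  rw [mul_cos_add_mul_sin_eq_sqrt_mul_sin_add_arctan hκ]
  exact mul_pos (sqrt_pos.2 (by positivity)) (sin_pos_of_pos_of_lt_pi (by linarith) (by linarith))

lemma hasDerivAt_riccati_trig_solution {q κ ζ ω T t : ℝ} (hω : ω ^ 2 = q * ζ - κ ^ 2)
    (hD : ω * cos (ω * (T - t)) + κ * sin (ω * (T - t)) ≠ 0) :
    HasDerivAt
      (fun x ↦ ζ * sin (ω * (T - x)) / (ω * cos (ω * (T - x)) + κ * sin (ω * (T - x))))
      (-q * (ζ * sin (ω * (T - t)) / (ω * cos (ω * (T - t)) + κ * sin (ω * (T - t)))) ^ 2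
        + 2 * κ * (ζ * sin (ω * (T - t)) / (ω * cos (ω * (T - t)) + κ * sin (ω * (T - t))))
        - ζ) t := by
  have hlin : HasDerivAt (fun x ↦ ω * (T - x)) (ω * -1) t :=
    ((hasDerivAt_id t).const_sub T).const_mul ω
  have hsin := (hasDerivAt_sin _).comp t hlin
  have hcos := (hasDerivAt_cos _).comp t hlin
  refine ((hsin.const_mul ζ).div ((hcos.const_mul ω).add (hsin.const_mul κ)) hD).congr_deriv ?_
  simp only [Function.comp_apply, Pi.add_apply]
  set S := sin (ω * (T - t))
  set C := cos (ω * (T - t))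
  rw [mul_comm ω C] at hD ⊢
  field_simp
  linear_combination (-ζ * S ^ 2) * hω

theorem stmt7_general (κ b ζ : ℝ) (hκ : 0 < κ) (hζ : 0 < ζ)
    (hΔ : 0 < 2 * b ^ 2 * ζ - κ ^ 2)
    (ω : ℝ) (hω : ω = Real.sqrt (2 * b ^ 2 * ζ - κ ^ 2))
    (Tc : ℝ) (hTc : Tc = (Real.pi - Real.arctan (ω / κ)) / ω)
    (T : ℝ) (hTTc : T < Tc)
    (f : ℝ → ℝ)
    (hf : ∀ t : ℝ, f t = ζ * Real.sin (ω * (T - t)) /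
      (ω * Real.cos (ω * (T - t)) + κ * Real.sin (ω * (T - t)))) :
    (∀ t ∈ Icc (0 : ℝ) T,
      0 < ω * Real.cos (ω * (T - t)) + κ * Real.sin (ω * (T - t))) ∧
    f T = 0 ∧
    (∀ t ∈ Icc (0 : ℝ) T, 0 ≤ f t) ∧
    (∀ t ∈ Icc (0 : ℝ) T,
      HasDerivAt f (-2 * b ^ 2 * f t ^ 2 + 2 * κ * f t - ζ) t) := by
  have hω₀ : 0 < ω := hω ▸ sqrt_pos.2 hΔ
  have hωT : ω * T < π - arctan (ω / κ) := by
    rwa [hTc, lt_div_iff₀ hω₀, mul_comm] at hTTc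
  have hphase : ∀ t ∈ Icc (0 : ℝ) T, 0 ≤ ω * (T - t) ∧ ω * (T - t) < π - arctan (ω / κ) :=
    fun t ⟨ht₀, htT⟩ ↦ ⟨by nlinarith, by nlinarith⟩
  have hpos : ∀ t ∈ Icc (0 : ℝ) T,
      0 < ω * cos (ω * (T - t)) + κ * sin (ω * (T - t)) :=
    fun t ht ↦ mul_cos_add_mul_sin_pos hκ hω₀ (hphase t ht).1 (hphase t ht).2
  refine ⟨hpos, by simp [hf], fun t ht ↦ ?_, fun t ht ↦ ?_⟩
  · have hsin : 0 ≤ sin (ω * (T - t)) := sin_nonneg_of_nonneg_of_le_pi (hphase t ht).1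
      (by linarith [(hphase t ht).2, arctan_pos.2 (div_pos hω₀ hκ)])
    rw [hf]
    exact div_nonneg (mul_nonneg hζ.le hsin) (hpos t ht).le
  · have hωsq : ω ^ 2 = 2 * b ^ 2 * ζ - κ ^ 2 := hω ▸ sq_sqrt hΔ.le
    rw [funext hf]
    beta_reduce
    exact (hasDerivAt_riccati_trig_solution hωsq (hpos t ht).ne').congr_deriv (by ring)

/-- Case `Δ > 0` of Lemma B.3: for horizons `T` below the critical time `T_c`,
the trigonometric explicit solution of the terminal value Riccati problem
`f' = -2 b² f² + 2κ f - ζ`, `f T = 0`, is well defined and nonnegative. -/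
theorem stmt7 (κ b ζ : ℝ) (hκ : 0 < κ) (hb : b ≠ 0) (hζ : 0 < ζ)
    (hΔ : 0 < 2 * b ^ 2 * ζ - κ ^ 2)
    (ω : ℝ) (hω : ω = Real.sqrt (2 * b ^ 2 * ζ - κ ^ 2))
    (Tc : ℝ) (hTc : Tc = (Real.pi - Real.arctan (ω / κ)) / ω)
    (T : ℝ) (hT : 0 < T) (hTTc : T < Tc)
    (f : ℝ → ℝ)
    (hf : ∀ t : ℝ, f t = ζ * Real.sin (ω * (T - t)) /
      (ω * Real.cos (ω * (T - t)) + κ * Real.sin (ω * (T - t)))) :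
    (∀ t ∈ Icc (0 : ℝ) T,
      0 < ω * Real.cos (ω * (T - t)) + κ * Real.sin (ω * (T - t))) ∧
    f T = 0 ∧
    (∀ t ∈ Icc (0 : ℝ) T, 0 ≤ f t) ∧
    (∀ t ∈ Icc (0 : ℝ) T,
      HasDerivAt f (-2 * b ^ 2 * f t ^ 2 + 2 * κ * f t - ζ) t) :=
  stmt7_general κ b ζ hκ hζ hΔ ω hω Tc hTc T hTTc f hf
end
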